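/- Let (x, y, s) ∈ int(C), let (Δx, Δy, Δs) satisfy the scaled Newton system with D = I and some ν ∈ ℝ, and set Δx̂ = T_x^{−1} Δx, Δŝ = T_x Δs, and z(α) = T_x^{−1} x(α) ∘ T_x s(α) − μ(α) e, where μ(α) = x(α)ᵀ s(α)/k. Then for every α ∈ ℝ: z(α) = (1−α)(w_{xs} − μ e) + α (W_{xs} − R_{xs}) Δx̂ + α² (Δx̂ ∘ Δŝ). -/

import Mathlib

open scoped BigOperators
open Matrix

namespace SOCP

/-- Index type for a block vector with `k` blocks, block `i` having dimension `d i + 1`. -/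
abbrev Idx {k : ℕ} (d : Fin k → ℕ) : Type := (i : Fin k) × Fin (d i + 1)

/-- The `i`-th block of a block vector. -/
def blk {k : ℕ} {d : Fin k → ℕ} (v : Idx d → ℝ) (i : Fin k) : Fin (d i + 1) → ℝ :=
  fun j => v ⟨i, j⟩

/-- Squared Euclidean norm of the tail `u_{2:m}` of a single block. -/
def tailNormSq {m : ℕ} (u : Fin (m + 1) → ℝ) : ℝ := ∑ j : Fin m, u j.succ ^ 2

/-- Euclidean norm of the tail `u_{2:m}` of a single block. -/
noncomputable def tailNorm {m : ℕ} (u : Fin (m + 1) → ℝ) : ℝ := Real.sqrt (tailNormSq u)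

/-- Membership in the cone `K` (a direct product of second-order cones). -/
def inK {k : ℕ} {d : Fin k → ℕ} (v : Idx d → ℝ) : Prop :=
  ∀ i : Fin k, tailNorm (blk v i) ≤ v ⟨i, 0⟩

/-- Membership in the interior of the cone `K`. -/
def inIntK {k : ℕ} {d : Fin k → ℕ} (v : Idx d → ℝ) : Prop :=
  ∀ i : Fin k, tailNorm (blk v i) < v ⟨i, 0⟩

/-- Euclidean inner product of vectors. -/
def dotV {ι : Type*} [Fintype ι] (u v : ι → ℝ) : ℝ := ∑ a, u a * v a

/-- Euclidean norm of a vector. -/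
noncomputable def vnorm {ι : Type*} [Fintype ι] (v : ι → ℝ) : ℝ :=
  Real.sqrt (∑ a, v a ^ 2)

/-- Blockwise Jordan product. -/
def jmul {k : ℕ} {d : Fin k → ℕ} (u v : Idx d → ℝ) : Idx d → ℝ := fun a =>
  if a.2 = 0 then ∑ j, u ⟨a.1, j⟩ * v ⟨a.1, j⟩
  else u ⟨a.1, 0⟩ * v a + v ⟨a.1, 0⟩ * u a

/-- The unit element `e` of the Jordan algebra. -/
def unitE {k : ℕ} {d : Fin k → ℕ} : Idx d → ℝ := fun a => if a.2 = 0 then 1 else 0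

/-- `λ_min` of the `i`-th block. -/
noncomputable def lamMin {k : ℕ} {d : Fin k → ℕ} (v : Idx d → ℝ) (i : Fin k) : ℝ :=
  v ⟨i, 0⟩ - tailNorm (blk v i)

/-- `λ_max` of the `i`-th block. -/
noncomputable def lamMax {k : ℕ} {d : Fin k → ℕ} (v : Idx d → ℝ) (i : Fin k) : ℝ :=
  v ⟨i, 0⟩ + tailNorm (blk v i)

/-- Arrow-head matrix of a single block. -/
def arrowBlk {m : ℕ} (u : Fin (m + 1) → ℝ) : Matrix (Fin (m + 1)) (Fin (m + 1)) ℝ :=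
  Matrix.of fun j j' =>
    if j = 0 then u j' else if j' = 0 then u j else if j = j' then u 0 else 0

/-- Arrow-head matrix `mat(v)` (block diagonal). -/
def matV {k : ℕ} {d : Fin k → ℕ} (v : Idx d → ℝ) : Matrix (Idx d) (Idx d) ℝ :=
  Matrix.blockDiagonal' fun i => arrowBlk (blk v i)

/-- `β_u = sqrt(u_1^2 - ‖u_{2:m}‖^2)` for a single block. -/
noncomputable def betaOf {m : ℕ} (u : Fin (m + 1) → ℝ) : ℝ :=
  Real.sqrt (u 0 ^ 2 - tailNormSq u)

/-- The matrix `T_u` for a single block. -/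
noncomputable def Tblk {m : ℕ} (u : Fin (m + 1) → ℝ) :
    Matrix (Fin (m + 1)) (Fin (m + 1)) ℝ :=
  Matrix.of fun j j' =>
    if j = 0 then u j'
    else if j' = 0 then u j
    else (if j = j' then betaOf u else 0) + u j * u j' / (betaOf u + u 0)

/-- The matrix `T_x` (block diagonal). -/
noncomputable def TV {k : ℕ} {d : Fin k → ℕ} (x : Idx d → ℝ) :
    Matrix (Idx d) (Idx d) ℝ :=
  Matrix.blockDiagonal' fun i => Tblk (blk x i)

/-- `w_{xs} = T_x s`. -/
noncomputable def wxs {k : ℕ} {d : Fin k → ℕ} (x s : Idx d → ℝ) : Idx d → ℝ :=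
  (TV x).mulVec s

/-- Central-path coefficient `μ(x,s) = xᵀs/k`. -/
noncomputable def muV {k : ℕ} {d : Fin k → ℕ} (x s : Idx d → ℝ) : ℝ :=
  dotV x s / (k : ℝ)

/-- Central-path distance `d_2(x,s) = √2 ‖w_{xs} - μ e‖`. -/
noncomputable def d2 {k : ℕ} {d : Fin k → ℕ} (x s : Idx d → ℝ) : ℝ :=
  Real.sqrt 2 * vnorm (wxs x s - muV x s • unitE)

/-- Central-path distance `d_∞(x,s)`. -/
noncomputable def dInf {k : ℕ} {d : Fin k → ℕ} (x s : Idx d → ℝ) : ℝ :=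
  ⨆ i : Fin k, max |lamMax (wxs x s) i - muV x s| |lamMin (wxs x s) i - muV x s|

/-- The matrix `Q = diag(1, -I)` for a single block. -/
def Qblk {m : ℕ} : Matrix (Fin (m + 1)) (Fin (m + 1)) ℝ :=
  Matrix.of fun j j' => if j = j' then (if j = 0 then (1 : ℝ) else -1) else 0

/-- The scaling group `G` of block matrices `Θ G` with `(Gⁱ)ᵀ Qⁱ Gⁱ = Qⁱ`. -/
def scalingGroup {k : ℕ} (d : Fin k → ℕ) : Set (Matrix (Idx d) (Idx d) ℝ) :=
  { D | ∃ (θ : Fin k → ℝ) (G : ∀ i, Matrix (Fin (d i + 1)) (Fin (d i + 1)) ℝ),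
      (∀ i, 0 < θ i) ∧ (∀ i, (G i)ᵀ * Qblk * G i = Qblk) ∧
      D = Matrix.blockDiagonal' fun i => θ i • G i }

/-- Operator 2-norm of a matrix. -/
noncomputable def op2 {m n : Type*} [Fintype m] [Fintype n] [DecidableEq n]
    (M : Matrix m n ℝ) : ℝ :=
  ‖LinearMap.toContinuousLinearMap (Matrix.toEuclideanLin M)‖

/-- `R_{xs} = T_x X⁻¹ S T_x`. -/
noncomputable def Rxs {k : ℕ} {d : Fin k → ℕ} (x s : Idx d → ℝ) :
    Matrix (Idx d) (Idx d) ℝ :=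
  TV x * (matV x)⁻¹ * matV s * TV x

/-- The scaled Newton system of the infeasible IPM (Monteiro–Zhang family). -/
def NewtonSys {k p : ℕ} {d : Fin k → ℕ} (A : Matrix (Fin p) (Idx d) ℝ)
    (Cm : Matrix (Idx d) (Idx d) ℝ) (x : Idx d → ℝ) (y : Fin p → ℝ) (s : Idx d → ℝ)
    (ν : ℝ) (D : Matrix (Idx d) (Idx d) ℝ)
    (dx : Idx d → ℝ) (dy : Fin p → ℝ) (ds : Idx d → ℝ) : Prop :=
  A.mulVec dx = -((1 - ν) • A.mulVec x) ∧
  Aᵀ.mulVec dy + Cm.mulVec dx + ds =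
    -((1 - ν) • (Aᵀ.mulVec y + Cm.mulVec x + s)) ∧
  (matV ((D⁻¹)ᵀ.mulVec x)).mulVec (D.mulVec ds)
      + (matV (D.mulVec s)).mulVec ((D⁻¹)ᵀ.mulVec dx)
    = (ν * muV x s) • unitE - jmul ((D⁻¹)ᵀ.mulVec x) (D.mulVec s)

/-- Central-path neighborhood `N_2(γ)`. -/
def N2 {k : ℕ} (d : Fin k → ℕ) (p : ℕ) (γ : ℝ) :
    Set ((Idx d → ℝ) × (Fin p → ℝ) × (Idx d → ℝ)) :=
  { z | inIntK z.1 ∧ inIntK z.2.2 ∧ d2 z.1 z.2.2 ≤ γ * muV z.1 z.2.2 }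

/-- Central-path neighborhood `N_∞(γ)`. -/
def NInf {k : ℕ} (d : Fin k → ℕ) (p : ℕ) (γ : ℝ) :
    Set ((Idx d → ℝ) × (Fin p → ℝ) × (Idx d → ℝ)) :=
  { z | inIntK z.1 ∧ inIntK z.2.2 ∧ dInf z.1 z.2.2 ≤ γ * muV z.1 z.2.2 }

/-- The matrix `U_u` for a single block: zero first row and column and lower-right block
`(u_1 - β_u) P_u`, with `P_u` the projection onto the complement of the tail of `u`
(zero when the tail vanishes). -/
noncomputable def Ublk {m : ℕ} (u : Fin (m + 1) → ℝ) :
    Matrix (Fin (m + 1)) (Fin (m + 1)) ℝ :=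
  Matrix.of fun j j' =>
    if j = 0 ∨ j' = 0 then 0
    else if tailNormSq u = 0 then 0
    else (u 0 - betaOf u) * ((if j = j' then (1 : ℝ) else 0) - u j * u j' / tailNormSq u)

/-- The block-diagonal matrix `U_x`. -/
noncomputable def UV {k : ℕ} {d : Fin k → ℕ} (x : Idx d → ℝ) :
    Matrix (Idx d) (Idx d) ℝ :=
  Matrix.blockDiagonal' fun i => Ublk (blk x i)

/-- `Γ_p = 2 (γ²/2 + (1-ν)² k)^{1/2} / (1 - 3γ)`. -/
noncomputable def GammaP (γ ν : ℝ) (k : ℕ) : ℝ :=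
  2 * Real.sqrt (γ ^ 2 / 2 + (1 - ν) ^ 2 * k) / (1 - 3 * γ)

/-- `Γ̃ = (4(γ² + δ²)/(1-3γ)²) (1 - δ/√(2k))⁻¹`. -/
noncomputable def GammaTilde (γ δ : ℝ) (k : ℕ) : ℝ :=
  4 * (γ ^ 2 + δ ^ 2) / (1 - 3 * γ) ^ 2 * (1 - δ / Real.sqrt (2 * k))⁻¹

/-!
Write `Δx̂ = T_x⁻¹ Δx` and `Δŝ = T_x Δs`. Since `T_x e = x`, the scaled iterates are
`T_x⁻¹ x(α) = e + α Δx̂` and `T_x s(α) = w_{xs} + α Δŝ`, so bilinearity of `∘` expands `z(α)`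
and two facts finish the computation.

* Gap: `Δx + (1 - ν) x` lies in `ker A` and `Δs + (1 - ν) s` in `range Aᵀ - C (ker A)`, so by
  skew-symmetry of `C` they are orthogonal. Summing the first components of the third Newton
  equation gives `xᵀΔs + Δxᵀs = (ν - 1) xᵀs`; hence `ΔxᵀΔs = 0` and `μ(α) = (1 - α + αν) μ`.
* Centering: `T_x X⁻¹ e = T_x x⁻¹ = e`, so applying `T_x X⁻¹` to the third Newton equation gives
  `Δŝ + w_{xs} + R_{xs} Δx̂ = νμ e`.

On the interior of the cone the blocks of `T_x` and `X` have trivial kernel, so both are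
invertible.
-/

section Block

variable {m : ℕ} {u : Fin (m + 1) → ℝ}

lemma tailNormSq_nonneg (u : Fin (m + 1) → ℝ) : 0 ≤ tailNormSq u :=
  Finset.sum_nonneg fun _ _ => sq_nonneg _

lemma sub_tailNormSq_pos (h : tailNorm u < u 0) : 0 < u 0 ^ 2 - tailNormSq u := by
  have hsq := Real.sq_sqrt (tailNormSq_nonneg u)
  unfold tailNorm at h
  nlinarith [Real.sqrt_nonneg (tailNormSq u)]

lemma betaOf_pos (h : tailNorm u < u 0) : 0 < betaOf u :=
  Real.sqrt_pos.mpr (sub_tailNormSq_pos h)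

lemma betaOf_sq (h : tailNorm u < u 0) : betaOf u ^ 2 = u 0 ^ 2 - tailNormSq u :=
  Real.sq_sqrt (sub_tailNormSq_pos h).le

lemma pos_of_tailNorm_lt (h : tailNorm u < u 0) : 0 < u 0 :=
  (Real.sqrt_nonneg _).trans_lt h

variable (u) (v : Fin (m + 1) → ℝ)

lemma arrowBlk_mulVec_zero :
    (arrowBlk u *ᵥ v) 0 = u 0 * v 0 + ∑ j : Fin m, u j.succ * v j.succ := by
  simp [mulVec, dotProduct, arrowBlk, Fin.sum_univ_succ]

lemma arrowBlk_mulVec_succ (j : Fin m) :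
    (arrowBlk u *ᵥ v) j.succ = u j.succ * v 0 + u 0 * v j.succ := by
  simp [mulVec, dotProduct, arrowBlk, Fin.sum_univ_succ, Fin.succ_ne_zero]

lemma Tblk_mulVec_zero :
    (Tblk u *ᵥ v) 0 = u 0 * v 0 + ∑ j : Fin m, u j.succ * v j.succ := by
  simp [mulVec, dotProduct, Tblk, Fin.sum_univ_succ]

lemma Tblk_mulVec_succ (j : Fin m) :
    (Tblk u *ᵥ v) j.succ = u j.succ * v 0 + betaOf u * v j.succ
      + u j.succ * (∑ i : Fin m, u i.succ * v i.succ) / (betaOf u + u 0) := by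
  simp only [mulVec, dotProduct, Tblk, of_apply, Fin.succ_ne_zero, ↓reduceIte, ite_mul, add_mul,
    zero_mul, Fin.sum_univ_succ, Fin.succ_inj, Finset.sum_add_distrib, Finset.sum_ite_eq,
    Finset.mem_univ, Finset.mul_sum, Finset.sum_div, add_assoc, add_right_inj]
  exact Finset.sum_congr rfl fun _ _ => by ring

noncomputable def jordanInvBlk : Fin (m + 1) → ℝ :=
  fun j => (if j = 0 then u 0 else -u j) / (u 0 ^ 2 - tailNormSq u)

lemma sum_tail_mul_jordanInvBlk :
    ∑ j : Fin m, u j.succ * jordanInvBlk u j.succ = -tailNormSq u / (u 0 ^ 2 - tailNormSq u) := by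
  simp only [jordanInvBlk, Fin.succ_ne_zero, if_false, tailNormSq, neg_div, Finset.sum_div,
    ← Finset.sum_neg_distrib, mul_div_assoc', mul_neg, sq]

lemma Tblk_mulVec_single_zero : Tblk u *ᵥ Pi.single 0 1 = u := by
  ext j
  cases j using Fin.cases with
  | zero => simp [Tblk_mulVec_zero]
  | succ j => simp [Tblk_mulVec_succ]

variable {u}

lemma arrowBlk_mulVec_jordanInvBlk (h : tailNorm u < u 0) :
    arrowBlk u *ᵥ jordanInvBlk u = Pi.single 0 1 := by
  have hδ := (sub_tailNormSq_pos h).ne'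
  ext j
  cases j using Fin.cases with
  | zero =>
    rw [arrowBlk_mulVec_zero, sum_tail_mul_jordanInvBlk]
    simp only [jordanInvBlk, if_true, Pi.single_eq_same]
    field_simp
    ring
  | succ j =>
    simp only [arrowBlk_mulVec_succ, jordanInvBlk, ↓reduceIte, Fin.succ_ne_zero, ne_eq,
      not_false_eq_true, Pi.single_eq_of_ne]
    ring

lemma Tblk_mulVec_jordanInvBlk (h : tailNorm u < u 0) :
    Tblk u *ᵥ jordanInvBlk u = Pi.single 0 1 := by
  have hδ := (sub_tailNormSq_pos h).ne'
  have hβ := betaOf_sq h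
  have hβu : betaOf u + u 0 ≠ 0 := (add_pos (betaOf_pos h) (pos_of_tailNorm_lt h)).ne'
  ext j
  cases j using Fin.cases with
  | zero =>
    rw [Tblk_mulVec_zero, sum_tail_mul_jordanInvBlk]
    simp only [jordanInvBlk, if_true, Pi.single_eq_same]
    field_simp
    ring
  | succ j =>
    rw [Tblk_mulVec_succ, sum_tail_mul_jordanInvBlk]
    simp only [jordanInvBlk, if_true, Fin.succ_ne_zero, if_false, Pi.single_apply]
    have hβ0 := (betaOf_pos h).ne'
    rw [show tailNormSq u = u 0 ^ 2 - betaOf u ^ 2 by linarith]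
    field_simp
    ring

lemma eq_zero_of_arrowBlk_mulVec_eq_zero (h : tailNorm u < u 0) {v : Fin (m + 1) → ℝ}
    (hv : arrowBlk u *ᵥ v = 0) : v = 0 := by
  set t := ∑ j : Fin m, u j.succ * v j.succ
  have h0 : u 0 * v 0 + t = 0 := by rw [← arrowBlk_mulVec_zero, hv]; rfl
  have hs (j : Fin m) : u j.succ * v 0 + u 0 * v j.succ = 0 := by
    rw [← arrowBlk_mulVec_succ, hv]; rfl
  have hsum : tailNormSq u * v 0 + u 0 * t = 0 := calc
    _ = ∑ j : Fin m, u j.succ * (u j.succ * v 0 + u 0 * v j.succ) := by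
      simp only [tailNormSq, t, Finset.sum_mul, Finset.mul_sum, ← Finset.sum_add_distrib]
      exact Finset.sum_congr rfl fun j _ => by ring
    _ = 0 := by simp [hs]
  have hv0 : v 0 = 0 := by
    have : (u 0 ^ 2 - tailNormSq u) * v 0 = 0 := by linear_combination u 0 * h0 - hsum
    exact (mul_eq_zero.1 this).resolve_left (sub_tailNormSq_pos h).ne'
  ext j
  cases j using Fin.cases with
  | zero => exact hv0
  | succ j =>
    have := hs j
    rw [hv0, mul_zero, zero_add] at this
    exact (mul_eq_zero.1 this).resolve_left (pos_of_tailNorm_lt h).ne'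

lemma eq_zero_of_Tblk_mulVec_eq_zero (h : tailNorm u < u 0) {v : Fin (m + 1) → ℝ}
    (hv : Tblk u *ᵥ v = 0) : v = 0 := by
  set t := ∑ j : Fin m, u j.succ * v j.succ
  have hβ := betaOf_pos h
  have hβu : betaOf u + u 0 ≠ 0 := (add_pos hβ (pos_of_tailNorm_lt h)).ne'
  have h0 : u 0 * v 0 + t = 0 := by rw [← Tblk_mulVec_zero, hv]; rfl
  have hs (j : Fin m) : u j.succ * (v 0 + t / (betaOf u + u 0)) + betaOf u * v j.succ = 0 := by
    have := congrFun hv j.succ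
    rw [Tblk_mulVec_succ, Pi.zero_apply] at this
    linear_combination this
  have hsum : tailNormSq u * (v 0 + t / (betaOf u + u 0)) + betaOf u * t = 0 := calc
    _ = ∑ j : Fin m,
          u j.succ * (u j.succ * (v 0 + t / (betaOf u + u 0)) + betaOf u * v j.succ) := by
      simp only [tailNormSq, t, Finset.sum_mul, Finset.mul_sum, ← Finset.sum_add_distrib]
      exact Finset.sum_congr rfl fun j _ => by ring
    _ = 0 := by simp [hs]
  -- `‖u_{2:m}‖² = (u₁ - β)(u₁ + β)`, so the weighted sum collapses to `β² v₁ = 0`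
  have hv0 : v 0 = 0 := by
    rw [show tailNormSq u = (u 0 - betaOf u) * (betaOf u + u 0) by
      linear_combination betaOf_sq h] at hsum
    field_simp at hsum
    have : betaOf u ^ 2 * v 0 = 0 := by linear_combination u 0 * h0 - hsum
    simpa [hβ.ne'] using this
  ext j
  cases j using Fin.cases with
  | zero => exact hv0
  | succ j =>
    have := hs j
    rw [hv0, show t = 0 by linear_combination h0 - u 0 * hv0] at this
    simpa [hβ.ne'] using this

lemma isUnit_arrowBlk (h : tailNorm u < u 0) : IsUnit (arrowBlk u) :=
  mulVec_injective_iff_isUnit.1 fun v w hvw => sub_eq_zero.1 <|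
    eq_zero_of_arrowBlk_mulVec_eq_zero h (by rw [mulVec_sub, hvw, sub_self])

lemma isUnit_Tblk (h : tailNorm u < u 0) : IsUnit (Tblk u) :=
  mulVec_injective_iff_isUnit.1 fun v w hvw => sub_eq_zero.1 <|
    eq_zero_of_Tblk_mulVec_eq_zero h (by rw [mulVec_sub, hvw, sub_self])

end Block

section BlockDiagonal

variable {ι R : Type*} {o : ι → Type*} [Fintype ι] [DecidableEq ι] [∀ i, Fintype (o i)]

lemma blockDiagonal'_mulVec_apply [NonUnitalNonAssocSemiring R] (M : ∀ i, Matrix (o i) (o i) R)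
    (v : (Σ i, o i) → R) (i : ι) (j : o i) :
    (blockDiagonal' M *ᵥ v) ⟨i, j⟩ = (M i *ᵥ fun j' => v ⟨i, j'⟩) j := by
  simp only [mulVec, dotProduct, ← Finset.univ_sigma_univ, Finset.sum_sigma]
  rw [Finset.sum_eq_single i]
  · simp [blockDiagonal'_apply_eq]
  · intro i' _ hi'
    simp [blockDiagonal'_apply_ne _ _ _ hi'.symm]
  · simp

lemma blockDiagonal'_mulVec_eq [NonUnitalNonAssocSemiring R] {M : ∀ i, Matrix (o i) (o i) R}
    {v w : (Σ i, o i) → R} (h : ∀ i, (M i *ᵥ fun j => v ⟨i, j⟩) = fun j => w ⟨i, j⟩) :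
    blockDiagonal' M *ᵥ v = w := by
  ext ⟨i, j⟩
  rw [blockDiagonal'_mulVec_apply, h]

lemma isUnit_blockDiagonal' [∀ i, DecidableEq (o i)] [CommRing R]
    {M : ∀ i, Matrix (o i) (o i) R} (h : ∀ i, IsUnit (M i)) : IsUnit (blockDiagonal' M) :=
  (Pi.isUnit_iff.2 h).map (blockDiagonal'RingHom o R)

end BlockDiagonal

lemma inv_mulVec_eq_of_mulVec_eq {n R : Type*} [Fintype n] [DecidableEq n] [CommRing R]
    {A : Matrix n n R} (hA : IsUnit A) {v w : n → R} (h : A *ᵥ v = w) : A⁻¹ *ᵥ w = v := by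
  rw [← h, mulVec_mulVec, nonsing_inv_mul _ ((isUnit_iff_isUnit_det A).1 hA), one_mulVec]

lemma dotProduct_mulVec_self_eq_zero_of_transpose_eq_neg {n R : Type*} [Fintype n] [CommRing R]
    [NoZeroDivisors R] [CharZero R] {C : Matrix n n R} (hC : Cᵀ = -C) (v : n → R) :
    v ⬝ᵥ C *ᵥ v = 0 :=
  self_eq_neg.1 <| by
    conv_lhs => rw [dotProduct_mulVec, ← mulVec_transpose, hC, neg_mulVec, neg_dotProduct,
      dotProduct_comm]

lemma dotProduct_newton_step_eq_zero {m n R : Type*} [Fintype m] [Fintype n] [CommRing R]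
    [NoZeroDivisors R] [CharZero R] {A : Matrix m n R} {C : Matrix n n R} (hC : Cᵀ = -C)
    {x s dx ds : n → R} {y dy : m → R} {ν : R}
    (h1 : A *ᵥ dx = -((1 - ν) • A *ᵥ x))
    (h2 : Aᵀ *ᵥ dy + C *ᵥ dx + ds = -((1 - ν) • (Aᵀ *ᵥ y + C *ᵥ x + s))) :
    (dx + (1 - ν) • x) ⬝ᵥ (ds + (1 - ν) • s) = 0 := by
  have hker : A *ᵥ (dx + (1 - ν) • x) = 0 := by
    rw [mulVec_add, mulVec_smul, h1, neg_add_cancel]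
  have hdual : ds + (1 - ν) • s = -(Aᵀ *ᵥ (dy + (1 - ν) • y) + C *ᵥ (dx + (1 - ν) • x)) := by
    simp only [mulVec_add, mulVec_smul]
    linear_combination (norm := module) h2
  rw [hdual, dotProduct_neg, dotProduct_add, dotProduct_mulVec, vecMul_transpose, hker,
    zero_dotProduct, zero_add, dotProduct_mulVec_self_eq_zero_of_transpose_eq_neg hC, neg_zero]

section JordanAlgebra

variable {k : ℕ} {d : Fin k → ℕ}

lemma jmul_comm (u v : Idx d → ℝ) : jmul u v = jmul v u := by
  ext a
  simp only [jmul]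
  split_ifs
  · exact Finset.sum_congr rfl fun _ _ => mul_comm _ _
  · ring

lemma unitE_jmul (v : Idx d → ℝ) : jmul unitE v = v := by
  ext ⟨i, j⟩
  cases j using Fin.cases with
  | zero => simp [jmul, unitE, Fin.sum_univ_succ]
  | succ j => simp [jmul, unitE]

lemma jmul_add_smul_add_smul (u v u' v' : Idx d → ℝ) (α : ℝ) :
    jmul (u + α • u') (v + α • v')
      = jmul u v + α • (jmul u v' + jmul u' v) + α ^ 2 • jmul u' v' := by
  ext a
  simp only [jmul, Pi.add_apply, Pi.smul_apply, smul_eq_mul]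
  split_ifs
  · simp only [Finset.mul_sum, ← Finset.sum_add_distrib]
    exact Finset.sum_congr rfl fun _ _ => by ring
  · ring

lemma jmul_eq_matV_mulVec (u v : Idx d → ℝ) : jmul u v = matV u *ᵥ v := by
  symm
  refine blockDiagonal'_mulVec_eq fun i => ?_
  ext j
  cases j using Fin.cases with
  | zero => simp [arrowBlk_mulVec_zero, jmul, blk, Fin.sum_univ_succ]
  | succ j =>
    simp only [arrowBlk_mulVec_succ, jmul, blk, Fin.succ_ne_zero, if_false]
    ring

lemma sum_jmul_head (u v : Idx d → ℝ) : ∑ i : Fin k, jmul u v ⟨i, 0⟩ = u ⬝ᵥ v := by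
  simp [jmul, dotProduct, ← Finset.univ_sigma_univ, Finset.sum_sigma]

lemma sum_unitE_head : ∑ i : Fin k, (unitE : Idx d → ℝ) ⟨i, 0⟩ = k := by
  simp [unitE]

end JordanAlgebra

lemma dotV_eq_dotProduct {ι : Type*} [Fintype ι] (u v : ι → ℝ) : dotV u v = u ⬝ᵥ v := rfl

section Scaling

variable {k : ℕ} {d : Fin k → ℕ} {x : Idx d → ℝ}

lemma natCast_mul_muV (x s : Idx d → ℝ) : (k : ℝ) * muV x s = x ⬝ᵥ s := by
  rcases k.eq_zero_or_pos with rfl | hk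
  · simp [dotProduct]
  · rw [muV, dotV_eq_dotProduct]
    field_simp

lemma muV_add_smul {s dx ds : Idx d → ℝ} {c : ℝ} (hc : x ⬝ᵥ ds + dx ⬝ᵥ s = c * (x ⬝ᵥ s))
    (ho : dx ⬝ᵥ ds = 0) (α : ℝ) :
    muV (x + α • dx) (s + α • ds) = (1 + α * c) * muV x s := by
  simp only [muV, dotV_eq_dotProduct, add_dotProduct, dotProduct_add, smul_dotProduct,
    dotProduct_smul, smul_eq_mul]
  linear_combination (α / k) * hc + (α ^ 2 / k) * ho

lemma dotProduct_add_dotProduct_of_complementarity {s dx ds : Idx d → ℝ} {ν : ℝ}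
    (h : matV x *ᵥ ds + matV s *ᵥ dx = (ν * muV x s) • unitE - jmul x s) :
    x ⬝ᵥ ds + dx ⬝ᵥ s = (ν - 1) * (x ⬝ᵥ s) := by
  rw [← jmul_eq_matV_mulVec, ← jmul_eq_matV_mulVec, jmul_comm s] at h
  have hhead := congrArg (fun v : Idx d → ℝ => ∑ i : Fin k, v ⟨i, 0⟩) h
  simp only [Pi.add_apply, Pi.sub_apply, Pi.smul_apply, smul_eq_mul, Finset.sum_add_distrib,
    Finset.sum_sub_distrib, ← Finset.mul_sum, sum_jmul_head, sum_unitE_head] at hhead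
  linear_combination hhead + ν * natCast_mul_muV x s

noncomputable def jordanInv (x : Idx d → ℝ) : Idx d → ℝ := fun a => jordanInvBlk (blk x a.1) a.2

lemma blk_unitE (i : Fin k) : blk (unitE : Idx d → ℝ) i = Pi.single 0 1 := by
  ext j
  simp [blk, unitE, Pi.single_apply]

variable (x) in
lemma TV_mulVec_unitE : TV x *ᵥ unitE = x :=
  blockDiagonal'_mulVec_eq fun i => by
    change Tblk (blk x i) *ᵥ blk unitE i = blk x i
    rw [blk_unitE, Tblk_mulVec_single_zero]

lemma TV_mulVec_jordanInv (hx : inIntK x) : TV x *ᵥ jordanInv x = unitE :=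
  blockDiagonal'_mulVec_eq fun i => (Tblk_mulVec_jordanInvBlk (hx i)).trans (blk_unitE i).symm

lemma matV_mulVec_jordanInv (hx : inIntK x) : matV x *ᵥ jordanInv x = unitE :=
  blockDiagonal'_mulVec_eq fun i => (arrowBlk_mulVec_jordanInvBlk (hx i)).trans (blk_unitE i).symm

lemma isUnit_TV (hx : inIntK x) : IsUnit (TV x) :=
  isUnit_blockDiagonal' fun i => isUnit_Tblk (hx i)

lemma isUnit_matV (hx : inIntK x) : IsUnit (matV x) :=
  isUnit_blockDiagonal' fun i => isUnit_arrowBlk (hx i)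

lemma TV_inv_mulVec_self (hx : inIntK x) : (TV x)⁻¹ *ᵥ x = unitE :=
  inv_mulVec_eq_of_mulVec_eq (isUnit_TV hx) (TV_mulVec_unitE x)

lemma TV_mulVec_add_Rxs_mulVec (hx : inIntK x) {s dx ds r : Idx d → ℝ}
    (h : matV x *ᵥ ds + matV s *ᵥ dx = r) :
    TV x *ᵥ ds + Rxs x s *ᵥ ((TV x)⁻¹ *ᵥ dx) = TV x *ᵥ ((matV x)⁻¹ *ᵥ r) := by
  have hT := (isUnit_iff_isUnit_det _).1 (isUnit_TV hx)
  rw [← h, mulVec_add, mulVec_add, inv_mulVec_eq_of_mulVec_eq (isUnit_matV hx) rfl, Rxs,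
    mulVec_mulVec, Matrix.mul_assoc _ (TV x), mul_nonsing_inv _ hT, mul_one, ← mulVec_mulVec,
    ← mulVec_mulVec]

lemma TV_mulVec_add_wxs_add_Rxs_mulVec (hx : inIntK x) {s dx ds : Idx d → ℝ} {c : ℝ}
    (h : matV x *ᵥ ds + matV s *ᵥ dx = c • unitE - jmul x s) :
    TV x *ᵥ ds + wxs x s + Rxs x s *ᵥ ((TV x)⁻¹ *ᵥ dx) = c • unitE := by
  rw [add_right_comm, TV_mulVec_add_Rxs_mulVec hx h, mulVec_sub, mulVec_sub, mulVec_smul,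
    mulVec_smul, inv_mulVec_eq_of_mulVec_eq (isUnit_matV hx) (matV_mulVec_jordanInv hx),
    TV_mulVec_jordanInv hx, jmul_eq_matV_mulVec, inv_mulVec_eq_of_mulVec_eq (isUnit_matV hx) rfl,
    wxs, sub_add_cancel]

end Scaling

theorem z_alpha_expansion_general {k p : ℕ} {d : Fin k → ℕ}
    (A : Matrix (Fin p) (Idx d) ℝ)
    (Cm : Matrix (Idx d) (Idx d) ℝ) (hC : Cmᵀ = -Cm)
    (x s : Idx d → ℝ) (y : Fin p → ℝ) (hx : inIntK x)
    (ν : ℝ) (dx ds : Idx d → ℝ) (dy : Fin p → ℝ)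
    (h1 : A.mulVec dx = -((1 - ν) • A.mulVec x))
    (h2 : Aᵀ.mulVec dy + Cm.mulVec dx + ds
      = -((1 - ν) • (Aᵀ.mulVec y + Cm.mulVec x + s)))
    (h3 : (matV x).mulVec ds + (matV s).mulVec dx
      = (ν * muV x s) • unitE - jmul x s) :
    ∀ α : ℝ,
      jmul ((TV x)⁻¹.mulVec (x + α • dx)) ((TV x).mulVec (s + α • ds))
          - muV (x + α • dx) (s + α • ds) • unitE
        = (1 - α) • (wxs x s - muV x s • unitE)
          + α • (matV (wxs x s) - Rxs x s).mulVec ((TV x)⁻¹.mulVec dx)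
          + α ^ 2 • jmul ((TV x)⁻¹.mulVec dx) ((TV x).mulVec ds) := by
  intro α
  have hcompl := dotProduct_add_dotProduct_of_complementarity h3
  have horth : dx ⬝ᵥ ds = 0 := by
    have hshift := dotProduct_newton_step_eq_zero hC h1 h2
    simp only [add_dotProduct, dotProduct_add, smul_dotProduct, dotProduct_smul,
      smul_eq_mul] at hshift
    linear_combination hshift - (1 - ν) * hcompl
  have hcenter := TV_mulVec_add_wxs_add_Rxs_mulVec hx h3
  rw [mulVec_add, mulVec_smul, TV_inv_mulVec_self hx, mulVec_add, mulVec_smul, ← wxs,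
    muV_add_smul hcompl horth, jmul_add_smul_add_smul, unitE_jmul, unitE_jmul,
    jmul_comm _ (wxs x s), jmul_eq_matV_mulVec (wxs x s), sub_mulVec]
  linear_combination (norm := module) α • hcenter

/-- Lemma 5: expansion of `z(α) = T_x⁻¹x(α) ∘ T_x s(α) - μ(α) e` for the unscaled
(`D = I`) search direction. -/
theorem z_alpha_expansion {k p : ℕ} {d : Fin k → ℕ} (hk : 0 < k)
    (A : Matrix (Fin p) (Idx d) ℝ) (hrank : A.rank = p)
    (Cm : Matrix (Idx d) (Idx d) ℝ) (hC : Cmᵀ = -Cm)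
    (x s : Idx d → ℝ) (y : Fin p → ℝ) (hx : inIntK x) (hs : inIntK s)
    (ν : ℝ) (dx ds : Idx d → ℝ) (dy : Fin p → ℝ)
    (h1 : A.mulVec dx = -((1 - ν) • A.mulVec x))
    (h2 : Aᵀ.mulVec dy + Cm.mulVec dx + ds
      = -((1 - ν) • (Aᵀ.mulVec y + Cm.mulVec x + s)))
    (h3 : (matV x).mulVec ds + (matV s).mulVec dx
      = (ν * muV x s) • unitE - jmul x s) :
    ∀ α : ℝ,
      jmul ((TV x)⁻¹.mulVec (x + α • dx)) ((TV x).mulVec (s + α • ds))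
          - muV (x + α • dx) (s + α • ds) • unitE
        = (1 - α) • (wxs x s - muV x s • unitE)
          + α • (matV (wxs x s) - Rxs x s).mulVec ((TV x)⁻¹.mulVec dx)
          + α ^ 2 • jmul ((TV x)⁻¹.mulVec dx) ((TV x).mulVec ds) :=
  z_alpha_expansion_general A Cm hC x s y hx ν dx ds dy h1 h2 h3

end SOCP
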